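/- Let A be a self-adjoint operator, λ ∈ ℝ, and suppose there exist vectors φ, g in H with ‖φ‖ = 1, ‖g‖ ≤ ε < 1, φ - g ∈ dom(A), and ‖(A - λ)(φ - g)‖ ≤ η + (1 + |λ|)ε. Then there is a spectral point μ of A with |λ - μ| ≤ (η + (1 + |λ|)ε)/(1 - ε). -/

import Mathlib

/-!
For a normal operator `T` one has `dist(z, σ T) * ‖u‖ ≤ ‖T u - z u‖`: the resolvent at `z` is
normal, so its norm equals its spectral radius `dist(z, σ T)⁻¹`, and that distance is attained
on the compact spectrum. Applied to `T = A`, `z = λ`, `u = φ - g` with `‖φ - g‖ ≥ 1 - ε`, this gives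
the inclusion.
-/

open scoped Pointwise

section CStarAlgebra

variable {A : Type*} [CStarAlgebra A]

instance IsStarNormal.algebraMap_sub (z : ℂ) (a : A) [IsStarNormal a] :
    IsStarNormal (algebraMap ℂ A z - a) where
  star_comm_self := by
    rw [star_sub, ← algebraMap_star_comm]
    exact (Algebra.commute_algebraMap_left _ _).sub_left
      ((Algebra.commute_algebraMap_right _ _).sub_right star_comm_self)

theorem IsStarNormal.exists_mem_spectrum_norm_resolvent_eq [Nontrivial A] {a : A}
    [IsStarNormal a] {z : ℂ} (hz : z ∈ resolventSet ℂ a) :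
    ∃ μ ∈ spectrum ℂ a, ‖resolvent a z‖ = ‖z - μ‖⁻¹ := by
  set u := (spectrum.mem_resolventSet_iff.mp hz).unit
  have : IsStarNormal (u : A) := by rw [IsUnit.unit_spec]; infer_instance
  obtain ⟨w, hw, hnorm⟩ := spectrum.exists_nnnorm_eq_spectralRadius (↑u⁻¹ : A)
  rw [IsStarNormal.spectralRadius_eq_nnnorm, ENNReal.coe_inj] at hnorm
  rw [← spectrum.map_inv, IsUnit.unit_spec, ← spectrum.singleton_sub_eq] at hw
  obtain ⟨μ, hμ, hμw⟩ : ∃ μ ∈ spectrum ℂ a, z - μ = w⁻¹ := by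
    simpa [Set.mem_inv, Set.mem_sub, eq_comm] using hw
  refine ⟨μ, hμ, ?_⟩
  rw [spectrum.resolvent_eq hz, hμw, norm_inv, inv_inv]
  exact congrArg NNReal.toReal hnorm.symm

end CStarAlgebra

theorem ContinuousLinearMap.exists_mem_spectrum_norm_sub_mul_le_norm_apply_sub
    {H : Type*} [NormedAddCommGroup H] [InnerProductSpace ℂ H] [CompleteSpace H] [Nontrivial H]
    (T : H →L[ℂ] H) [IsStarNormal T] (z : ℂ) (u : H) :
    ∃ μ ∈ spectrum ℂ T, ‖z - μ‖ * ‖u‖ ≤ ‖T u - z • u‖ := by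
  by_cases hz : z ∈ resolventSet ℂ T
  case neg => exact ⟨z, hz, by simp⟩
  obtain ⟨μ, hμ, hR⟩ := IsStarNormal.exists_mem_spectrum_norm_resolvent_eq hz
  refine ⟨μ, hμ, ?_⟩
  have hzμ : 0 < ‖z - μ‖ := norm_pos_iff.mpr (sub_ne_zero.mpr fun h => hμ (h ▸ hz))
  have hRX : resolvent T z * (algebraMap ℂ _ z - T) = 1 :=
    Ring.inverse_mul_cancel _ (spectrum.mem_resolventSet_iff.mp hz)
  have hXu : (algebraMap ℂ (H →L[ℂ] H) z - T) u = -(T u - z • u) := by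
    simp [Algebra.algebraMap_eq_smul_one]
  calc ‖z - μ‖ * ‖u‖ = ‖z - μ‖ * ‖(resolvent T z * (algebraMap ℂ _ z - T)) u‖ := by
        rw [hRX, one_apply_eq_self]
    _ ≤ ‖z - μ‖ * (‖resolvent T z‖ * ‖T u - z • u‖) := by
        rw [mul_apply_eq_comp, hXu, map_neg, norm_neg]
        gcongr
        exact (resolvent T z).le_opNorm _
    _ = ‖T u - z • u‖ := by rw [hR, ← mul_assoc, mul_inv_cancel₀ hzμ.ne', one_mul]

theorem mps_eigenvalue_inclusion_general
    {H : Type*} [NormedAddCommGroup H] [InnerProductSpace ℂ H] [CompleteSpace H]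
    (A : H →L[ℂ] H) (hA : IsSelfAdjoint A) (lam ε η : ℝ)
    (hε1 : ε < 1)
    (φ g : H) (hφ : ‖φ‖ = 1) (hg : ‖g‖ ≤ ε)
    (h : ‖A (φ - g) - (lam : ℂ) • (φ - g)‖ ≤ η + (1 + |lam|) * ε) :
    ∃ μ ∈ spectrum ℂ A,
      ‖(lam : ℂ) - μ‖ ≤ (η + (1 + |lam|) * ε) / (1 - ε) := by
  have : Nontrivial H := nontrivial_of_ne φ 0 (by rintro rfl; simp at hφ)
  have := hA.isStarNormal
  obtain ⟨μ, hμ, hdist⟩ :=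
    A.exists_mem_spectrum_norm_sub_mul_le_norm_apply_sub (lam : ℂ) (φ - g)
  have hu : 1 - ε ≤ ‖φ - g‖ := by linarith [norm_sub_norm_le φ g]
  refine ⟨μ, hμ, (le_div_iff₀ (by linarith)).mpr ?_⟩
  calc ‖(lam : ℂ) - μ‖ * (1 - ε) ≤ ‖(lam : ℂ) - μ‖ * ‖φ - g‖ := by gcongr
    _ ≤ η + (1 + |lam|) * ε := hdist.trans h

theorem mps_eigenvalue_inclusion
    {H : Type*} [NormedAddCommGroup H] [InnerProductSpace ℂ H] [CompleteSpace H]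
    (A : H →L[ℂ] H) (hA : IsSelfAdjoint A) (lam ε η : ℝ)
    (hε0 : 0 ≤ ε) (hε1 : ε < 1) (hη : 0 ≤ η)
    (φ g : H) (hφ : ‖φ‖ = 1) (hg : ‖g‖ ≤ ε)
    (h : ‖A (φ - g) - (lam : ℂ) • (φ - g)‖ ≤ η + (1 + |lam|) * ε) :
    ∃ μ ∈ spectrum ℂ A,
      ‖(lam : ℂ) - μ‖ ≤ (η + (1 + |lam|) * ε) / (1 - ε) :=
  mps_eigenvalue_inclusion_general A hA lam ε η hε1 φ g hφ hg h
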